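/- arXiv:1902.02329 — 4 statements merged into one kernel-verified Lean document; each statement's English description precedes it below -/
import Mathlib

section
/- Let p ∈ [1,2] and let n ≥ 1. For any nonnegative real numbers a_1, …, a_n, one has (∑_{j=1}^n a_j)^p ≤ ∑_{j=1}^n a_j^p + (2^p − 2) · ∑_{1 ≤ i < j ≤ n} (a_i a_j)^{p/2}. -/
/-!
For two terms, write `b = t a` with `0 < t ≤ 1`. The ratio `((1 + t)^p - 1 - t^p) / t^(p/2)` is
increasing in `t`: its derivative has the sign of `1 - t^p - (1 - t)(1 + t)^(p-1)`, which is
nonnegative by Bernoulli's inequality applied to `(1 + t)^(p-1)` and to `t^(p-1)`. Its value at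
`t = 1` is `2^p - 2`. The general case follows by induction, adding the largest index `x` last:
the cross term `(a_x ∑ a_i)^(p/2)` is at most `∑ (a_i a_x)^(p/2)` since `p/2 ≤ 1`.
-/

open Real Finset

namespace Real

variable {p : ℝ}

lemma one_sub_mul_one_add_rpow_add_rpow_le_one (hp₁ : 1 ≤ p) (hp₂ : p ≤ 2) {t : ℝ}
    (ht₀ : 0 ≤ t) (ht₁ : t ≤ 1) :
    (1 - t) * (1 + t) ^ (p - 1) + t ^ p ≤ 1 := by
  have hu : (1 + t) ^ (p - 1) ≤ 1 + (p - 1) * t :=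
    rpow_one_add_le_one_add_mul_self (by linarith) (by linarith) (by linarith)
  have hv : t ^ (p - 1) ≤ 1 + (p - 1) * (t - 1) := by
    simpa using rpow_one_add_le_one_add_mul_self (s := t - 1) (by linarith) (by linarith)
      (by linarith : p - 1 ≤ 1)
  have htp : t ^ p = t ^ (p - 1) * t := by
    rw [← rpow_add_one' ht₀ (by linarith)]; ring_nf
  -- The two Bernoulli bounds add up to exactly `1`.
  nlinarith [mul_le_mul_of_nonneg_left hu (by linarith : (0 : ℝ) ≤ 1 - t),
    mul_le_mul_of_nonneg_left hv ht₀]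

lemma hasDerivAt_one_add_rpow_sub_mul_rpow {q x : ℝ} (hx : 0 < x) :
    HasDerivAt (fun t => ((1 + t) ^ p - 1 - t ^ p) * t ^ q)
      ((p * (1 + x) ^ (p - 1) - p * x ^ (p - 1)) * x ^ q
        + ((1 + x) ^ p - 1 - x ^ p) * (q * x ^ (q - 1))) x := by
  have h₁ : HasDerivAt (fun t : ℝ => (1 + t) ^ p) (1 * p * (1 + x) ^ (p - 1)) x :=
    ((hasDerivAt_id x).const_add 1).rpow_const (Or.inl (by simp only [id]; linarith))
  rw [one_mul] at h₁
  exact ((h₁.sub_const 1).sub (hasDerivAt_rpow_const (Or.inl hx.ne'))).mul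
    (hasDerivAt_rpow_const (Or.inl hx.ne'))

lemma monotoneOn_one_add_rpow_sub_mul_rpow (hp₁ : 1 ≤ p) (hp₂ : p ≤ 2) :
    MonotoneOn (fun t : ℝ => ((1 + t) ^ p - 1 - t ^ p) * t ^ (-(p / 2))) (Set.Ioc 0 1) := by
  refine monotoneOn_of_hasDerivWithinAt_nonneg (convex_Ioc 0 1)
    (fun x hx => (hasDerivAt_one_add_rpow_sub_mul_rpow hx.1).continuousAt.continuousWithinAt)
    (fun x hx => (hasDerivAt_one_add_rpow_sub_mul_rpow
      (interior_subset hx : x ∈ Set.Ioc (0 : ℝ) 1).1).hasDerivWithinAt) ?_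
  rw [interior_Ioc]
  intro x ⟨hx₀, hx₁⟩
  have hneg : x ^ (-(p / 2)) = x ^ (-(p / 2) - 1) * x := by
    rw [← rpow_add_one hx₀.ne']; ring_nf
  have hone_add : (1 + x) ^ p = (1 + x) ^ (p - 1) * (1 + x) := by
    rw [← rpow_add_one (by linarith)]; ring_nf
  have hself : x ^ p = x ^ (p - 1) * x := by
    rw [← rpow_add_one hx₀.ne']; ring_nf
  -- The derivative is `(p/2) x^(-p/2-1) (1 - x^p - (1 - x)(1 + x)^(p-1))`.
  have key := one_sub_mul_one_add_rpow_add_rpow_le_one hp₁ hp₂ hx₀.le hx₁.le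
  have hpos : 0 ≤ p / 2 * x ^ (-(p / 2) - 1) := by positivity
  rw [hneg]
  nlinarith [mul_nonneg hpos (sub_nonneg.2 key)]

lemma one_add_rpow_le (hp₁ : 1 ≤ p) (hp₂ : p ≤ 2) {t : ℝ} (ht₀ : 0 ≤ t) (ht₁ : t ≤ 1) :
    (1 + t) ^ p ≤ 1 + t ^ p + (2 ^ p - 2) * t ^ (p / 2) := by
  rcases ht₀.eq_or_lt with rfl | ht₀
  · simp [zero_rpow (by linarith : p ≠ 0), zero_rpow (by linarith : p / 2 ≠ 0)]
  have hmono := monotoneOn_one_add_rpow_sub_mul_rpow hp₁ hp₂ ⟨ht₀, ht₁⟩ ⟨one_pos, le_rfl⟩ ht₁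
  have hcancel : t ^ (-(p / 2)) * t ^ (p / 2) = 1 := by
    rw [← rpow_add ht₀, neg_add_cancel, rpow_zero]
  simp only [one_rpow, one_add_one_eq_two, mul_one] at hmono
  have := mul_le_mul_of_nonneg_right hmono (rpow_nonneg ht₀.le (p / 2))
  rw [mul_assoc, hcancel, mul_one] at this
  linarith

lemma add_rpow_le_of_le (hp₁ : 1 ≤ p) (hp₂ : p ≤ 2) {a b : ℝ} (hb : 0 ≤ b) (hba : b ≤ a) :
    (a + b) ^ p ≤ a ^ p + b ^ p + (2 ^ p - 2) * (a * b) ^ (p / 2) := by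
  rcases (hb.trans hba).eq_or_lt with rfl | ha
  · obtain rfl : b = 0 := le_antisymm hba hb
    simp [zero_rpow (by linarith : p ≠ 0), zero_rpow (by linarith : p / 2 ≠ 0)]
  obtain ⟨t, ht₀, ht₁, rfl⟩ : ∃ t, 0 ≤ t ∧ t ≤ 1 ∧ b = a * t :=
    ⟨b / a, by positivity, (div_le_one ha).2 hba, by field_simp⟩
  have hprod : (a * (a * t)) ^ (p / 2) = a ^ p * t ^ (p / 2) := by
    rw [← mul_assoc, ← sq, mul_rpow (by positivity) ht₀, ← rpow_natCast_mul ha.le, Nat.cast_ofNat,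
      mul_div_cancel₀ p two_ne_zero]
  rw [← mul_one_add, mul_rpow ha.le (by linarith), mul_rpow ha.le ht₀, hprod]
  nlinarith [mul_le_mul_of_nonneg_left (one_add_rpow_le hp₁ hp₂ ht₀ ht₁) (rpow_nonneg ha.le p)]

lemma add_rpow_le (hp₁ : 1 ≤ p) (hp₂ : p ≤ 2) {a b : ℝ} (ha : 0 ≤ a) (hb : 0 ≤ b) :
    (a + b) ^ p ≤ a ^ p + b ^ p + (2 ^ p - 2) * (a * b) ^ (p / 2) := by
  rcases le_total b a with hba | hab
  · exact add_rpow_le_of_le hp₁ hp₂ hb hba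
  · have := add_rpow_le_of_le hp₁ hp₂ ha hab
    rwa [add_comm b, add_comm (b ^ p), mul_comm b] at this

lemma rpow_sum_le_sum_rpow {ι : Type*} {q : ℝ} (hq₀ : 0 < q) (hq₁ : q ≤ 1) (s : Finset ι)
    {a : ι → ℝ} (ha : ∀ i ∈ s, 0 ≤ a i) :
    (∑ i ∈ s, a i) ^ q ≤ ∑ i ∈ s, a i ^ q := by
  classical
  induction s using Finset.induction_on with
  | empty => simp [zero_rpow hq₀.ne']
  | insert x s hx ih =>
    rw [sum_insert hx, sum_insert hx]
    have hs : ∀ i ∈ s, 0 ≤ a i := fun i hi => ha i (mem_insert_of_mem hi)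
    calc (a x + ∑ i ∈ s, a i) ^ q ≤ a x ^ q + (∑ i ∈ s, a i) ^ q :=
          rpow_add_le_add_rpow (ha x (mem_insert_self x s)) (sum_nonneg hs) hq₀.le hq₁
      _ ≤ a x ^ q + ∑ i ∈ s, a i ^ q := by gcongr; exact ih hs

end Real

lemma Finset.sum_sum_ite_lt_insert_of_forall_lt {ι M : Type*} [LinearOrder ι]
    [AddCommMonoid M] (f : ι → ι → M) {s : Finset ι} {x : ι} (hx : ∀ y ∈ s, y < x) :
    ∑ i ∈ insert x s, ∑ j ∈ insert x s, (if i < j then f i j else 0)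
      = ∑ i ∈ s, ∑ j ∈ s, (if i < j then f i j else 0) + ∑ i ∈ s, f i x := by
  have hxs : x ∉ s := fun h => (hx x h).false
  have hrow : ∑ j ∈ insert x s, (if x < j then f x j else 0) = 0 :=
    sum_eq_zero fun j hj => if_neg (by
      rcases mem_insert.1 hj with rfl | hj
      exacts [lt_irrefl j, (hx j hj).not_gt])
  rw [sum_insert hxs, hrow, zero_add, ← sum_add_distrib]
  refine sum_congr rfl fun i hi => ?_
  rw [sum_insert hxs, if_pos (hx i hi), add_comm]

lemma Finset.rpow_sum_le_sum_rpow_add_cross {ι : Type*} [LinearOrder ι] {p : ℝ} (hp₁ : 1 ≤ p)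
    (hp₂ : p ≤ 2) (s : Finset ι) {a : ι → ℝ} (ha : ∀ i ∈ s, 0 ≤ a i) :
    (∑ i ∈ s, a i) ^ p ≤ ∑ i ∈ s, a i ^ p
      + (2 ^ p - 2) * ∑ i ∈ s, ∑ j ∈ s, (if i < j then (a i * a j) ^ (p / 2) else 0) := by
  have hc : 0 ≤ (2 : ℝ) ^ p - 2 := sub_nonneg.2 (self_le_rpow_of_one_le one_le_two hp₁)
  induction s using Finset.induction_on_max with
  | empty => simp [zero_rpow (by linarith : p ≠ 0)]
  | insert x s hx ih =>
    have hxs : x ∉ s := fun h => (hx x h).false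
    have has : ∀ i ∈ s, 0 ≤ a i := fun i hi => ha i (mem_insert_of_mem hi)
    have hax : 0 ≤ a x := ha x (mem_insert_self x s)
    have hS : 0 ≤ ∑ i ∈ s, a i := sum_nonneg has
    have hcross : (a x * ∑ i ∈ s, a i) ^ (p / 2) ≤ ∑ i ∈ s, (a i * a x) ^ (p / 2) := by
      calc (a x * ∑ i ∈ s, a i) ^ (p / 2) = a x ^ (p / 2) * (∑ i ∈ s, a i) ^ (p / 2) :=
            mul_rpow hax hS
        _ ≤ a x ^ (p / 2) * ∑ i ∈ s, a i ^ (p / 2) := by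
            gcongr; exact rpow_sum_le_sum_rpow (by linarith) (by linarith) s has
        _ = ∑ i ∈ s, (a i * a x) ^ (p / 2) := by
            rw [mul_sum]
            exact sum_congr rfl fun i hi => by rw [mul_rpow (has i hi) hax, mul_comm]
    rw [sum_insert hxs, sum_insert hxs, sum_sum_ite_lt_insert_of_forall_lt _ hx]
    nlinarith [add_rpow_le hp₁ hp₂ hax hS, ih has, mul_le_mul_of_nonneg_left hcross hc]

theorem statement16_general (p : ℝ) (hp : p ∈ Set.Icc (1 : ℝ) 2)
    (n : ℕ) (a : Fin n → ℝ) (ha : ∀ i, 0 ≤ a i) :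
    (∑ j, a j) ^ p ≤
      (∑ j, a j ^ p) +
        ((2 : ℝ) ^ p - 2) *
          ∑ i : Fin n, ∑ j : Fin n, if i < j then (a i * a j) ^ (p / 2) else 0 :=
  Finset.rpow_sum_le_sum_rpow_add_cross hp.1 hp.2 univ fun i _ => ha i

/-- Remark (pin), for `p ∈ [1,2]` and finitely many nonnegative reals:
`(∑_j a_j)^p ≤ ∑_j a_j^p + (2^p - 2) ∑_{i<j} (a_i a_j)^{p/2}`. -/
theorem statement16 (p : ℝ) (hp : p ∈ Set.Icc (1 : ℝ) 2)
    (n : ℕ) (hn : 1 ≤ n) (a : Fin n → ℝ) (ha : ∀ i, 0 ≤ a i) :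
    (∑ j, a j) ^ p ≤
      (∑ j, a j ^ p) +
        ((2 : ℝ) ^ p - 2) *
          ∑ i : Fin n, ∑ j : Fin n, if i < j then (a i * a j) ^ (p / 2) else 0 :=
  statement16_general p hp n a ha
end

section
/- Let p ∈ (0,1] ∪ [2,∞) and let n ≥ 1. For any nonnegative real numbers a_1, …, a_n, one has (∑_{j=1}^n a_j)^p ≥ ∑_{j=1}^n a_j^p + (2^p − 2) · ∑_{1 ≤ i < j ≤ n} (a_i a_j)^{p/2}. -/
open Real

-- Bernoulli for exponents in [-1,0]
lemma bern_neg {x r : ℝ} (hx : -1 < x) (hr0 : -1 ≤ r) (hr1 : r ≤ 0) :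
    1 + r * x ≤ (1 + x) ^ r := by
  have hx1 : (0:ℝ) < 1 + x := by linarith
  have hrpos : (0:ℝ) < (1 + x) ^ r := rpow_pos_of_pos hx1 r
  rcases le_or_gt (1 + r * x) 0 with h | h
  · linarith
  · have hs0 : (0:ℝ) ≤ -r := by linarith
    have hs1 : -r ≤ 1 := by linarith
    have h1 : (1 + x) ^ (-r) ≤ 1 + (-r) * x := rpow_one_add_le_one_add_mul_self hx.le hs0 hs1
    have h2 : (1 + x) ^ r * (1 + x) ^ (-r) = 1 := by
      rw [← rpow_add hx1]; simp
    nlinarith [mul_le_mul_of_nonneg_left h1 h.le, sq_nonneg (r * x),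
      mul_pos h hrpos]

-- the key derivative-sign inequality: 1 - t^p ≤ (1+t)^(p-1) * (1-t)
lemma keyC {p t : ℝ} (hp : p ∈ Set.Ioc (0 : ℝ) 1 ∪ Set.Ici (2 : ℝ))
    (ht0 : 0 < t) (ht1 : t ≤ 1) : 1 - t ^ p ≤ (1 + t) ^ (p - 1) * (1 - t) := by
  have b12 : 1 + (p-1) * t ≤ (1+t) ^ (p-1) ∧ 1 + (p-1) * (t-1) ≤ (1+(t-1)) ^ (p-1) := by
    rcases hp with hp | hp
    · obtain ⟨hp0, hp1⟩ := hp
      constructor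
      · exact bern_neg (by linarith) (by linarith) (by linarith)
      · exact bern_neg (by linarith) (by linarith) (by linarith)
    · simp only [Set.mem_Ici] at hp
      constructor
      · exact one_add_mul_self_le_rpow_one_add (by linarith) (by linarith)
      · exact one_add_mul_self_le_rpow_one_add (by linarith) (by linarith)
  obtain ⟨b1, b2⟩ := b12
  have ht' : (1:ℝ) + (t - 1) = t := by ring
  rw [ht'] at b2
  have hpe : t ^ p = t ^ (p-1) * t := by
    rw [← rpow_add_one ht0.ne' (p-1)]; ring_nf
  rw [hpe]
  nlinarith [mul_le_mul_of_nonneg_right b2 ht0.le,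
    mul_le_mul_of_nonneg_right b1 (by linarith : (0:ℝ) ≤ 1 - t)]

lemma g_lower {p : ℝ} (hp : p ∈ Set.Ioc (0 : ℝ) 1 ∪ Set.Ici (2 : ℝ)) :
    ∀ t ∈ Set.Ioc (0:ℝ) 1,
      (2:ℝ) ^ p - 2 ≤ ((1+t) ^ p - 1) * t ^ (-(p/2)) - t ^ (p/2) := by
  have hp0 : 0 < p := by
    rcases hp with hp | hp
    · exact hp.1
    · simp only [Set.mem_Ici] at hp; linarith
  set g : ℝ → ℝ := fun t => ((1+t) ^ p - 1) * t ^ (-(p/2)) - t ^ (p/2) with hg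
  have hder : ∀ t : ℝ, 0 < t → HasDerivAt g
      ((1 * p * (1+t) ^ (p-1)) * t ^ (-(p/2)) + ((1+t) ^ p - 1) * (-(p/2) * t ^ (-(p/2)-1))
        - p/2 * t ^ (p/2-1)) t := by
    intro t ht
    have h1 : HasDerivAt (fun t : ℝ => (1+t) ^ p) (1 * p * (1+t) ^ (p-1)) t :=
      ((hasDerivAt_id t).const_add 1).rpow_const (Or.inl (by positivity))
    have h2 : HasDerivAt (fun t : ℝ => t ^ (-(p/2))) (-(p/2) * t ^ (-(p/2)-1)) t :=
      hasDerivAt_rpow_const (Or.inl ht.ne')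
    have h3 : HasDerivAt (fun t : ℝ => t ^ (p/2)) (p/2 * t ^ (p/2-1)) t :=
      hasDerivAt_rpow_const (Or.inl ht.ne')
    exact ((h1.sub_const 1).mul h2).sub h3
  have hanti : AntitoneOn g (Set.Ioc 0 1) := by
    apply antitoneOn_of_deriv_nonpos (convex_Ioc 0 1)
    · intro t ht
      exact (hder t ht.1).differentiableAt.continuousAt.continuousWithinAt
    · rw [interior_Ioc]
      intro t ht
      exact (hder t ht.1).differentiableAt.differentiableWithinAt
    · rw [interior_Ioc]
      intro t ht
      obtain ⟨ht0, ht1⟩ := ht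
      rw [(hder t ht0).deriv]
      have e1 : t ^ (-(p/2)) = t ^ (-(p/2)-1) * t := by
        rw [← rpow_add_one ht0.ne']; congr 1; ring
      have e2 : t ^ (p/2-1) = t ^ (-(p/2)-1) * t ^ p := by
        rw [← rpow_add ht0]; congr 1; ring
      have hfe : (1+t) ^ p = (1+t) ^ (p-1) * (1+t) := by
        rw [← rpow_add_one (by positivity : (1:ℝ)+t ≠ 0)]; congr 1; ring
      have hbr : 2*t*(1+t) ^ (p-1) - (1+t) ^ p + 1 - t ^ p ≤ 0 := by
        have hk := keyC hp ht0 ht1.le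
        rw [hfe]; nlinarith
      have hE : (1 * p * (1+t) ^ (p-1)) * t ^ (-(p/2))
            + ((1+t) ^ p - 1) * (-(p/2) * t ^ (-(p/2)-1)) - p/2 * t ^ (p/2-1)
          = t ^ (-(p/2)-1) * ((p/2) * (2*t*(1+t) ^ (p-1) - (1+t) ^ p + 1 - t ^ p)) := by
        rw [e1, e2]; ring
      rw [hE]
      apply mul_nonpos_of_nonneg_of_nonpos (rpow_nonneg ht0.le _)
      apply mul_nonpos_of_nonneg_of_nonpos (by linarith) hbr
  intro t ht
  have h1 : g 1 ≤ g t := hanti ht (by simp) ht.2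
  have hg1 : g 1 = (2:ℝ) ^ p - 2 := by
    simp [hg, one_rpow]
    ring_nf
  rw [hg1] at h1
  exact h1

lemma two_var_aux {p a b : ℝ} (hp : p ∈ Set.Ioc (0 : ℝ) 1 ∪ Set.Ici (2 : ℝ))
    (hb : 0 < b) (hba : b ≤ a) :
    a ^ p + b ^ p + ((2:ℝ) ^ p - 2) * (a * b) ^ (p/2) ≤ (a + b) ^ p := by
  have ha : 0 < a := lt_of_lt_of_le hb hba
  set t : ℝ := b / a with htdef
  have ht0 : 0 < t := div_pos hb ha
  have ht1 : t ≤ 1 := (div_le_one ha).mpr hba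
  have hg := g_lower hp t ⟨ht0, ht1⟩
  -- multiply by t^(p/2) > 0
  have htq : (0:ℝ) < t ^ (p/2) := rpow_pos_of_pos ht0 _
  have hmul : ((2:ℝ) ^ p - 2) * t ^ (p/2) ≤ (1+t) ^ p - 1 - t ^ p := by
    have h := mul_le_mul_of_nonneg_right hg htq.le
    have e1 : t ^ (-(p/2)) * t ^ (p/2) = 1 := by
      rw [← rpow_add ht0]; simp
    have e2 : t ^ (p/2) * t ^ (p/2) = t ^ p := by
      rw [← rpow_add ht0]; congr 1; ring
    calc ((2:ℝ) ^ p - 2) * t ^ (p/2)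
        ≤ (((1+t) ^ p - 1) * t ^ (-(p/2)) - t ^ (p/2)) * t ^ (p/2) := h
      _ = ((1+t) ^ p - 1) * (t ^ (-(p/2)) * t ^ (p/2)) - t ^ (p/2) * t ^ (p/2) := by ring
      _ = (1+t) ^ p - 1 - t ^ p := by rw [e1, e2]; ring
  -- scale by a^p
  have hap : (0:ℝ) < a ^ p := rpow_pos_of_pos ha _
  have s1 : (a + b) ^ p = a ^ p * (1 + t) ^ p := by
    rw [← mul_rpow ha.le (by linarith : (0:ℝ) ≤ 1 + t)]
    congr 1; rw [htdef]; field_simp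
  have s2 : b ^ p = a ^ p * t ^ p := by
    rw [← mul_rpow ha.le ht0.le]
    congr 1; rw [htdef]; field_simp
  have s3 : (a * b) ^ (p/2) = a ^ p * t ^ (p/2) := by
    have hb2 : b = a * t := by rw [htdef]; field_simp
    rw [hb2, show a * (a * t) = (a * a) * t by ring, mul_rpow (by positivity) ht0.le,
      mul_rpow ha.le ha.le, ← rpow_add ha]
    congr 2; ring
  rw [s1, s2, s3]
  nlinarith [mul_le_mul_of_nonneg_left hmul hap.le]

lemma two_var {p a b : ℝ} (hp : p ∈ Set.Ioc (0 : ℝ) 1 ∪ Set.Ici (2 : ℝ))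
    (ha : 0 ≤ a) (hb : 0 ≤ b) :
    a ^ p + b ^ p + ((2:ℝ) ^ p - 2) * (a * b) ^ (p/2) ≤ (a + b) ^ p := by
  have hp0 : 0 < p := by
    rcases hp with hp | hp
    · exact hp.1
    · simp only [Set.mem_Ici] at hp; linarith
  rcases eq_or_lt_of_le ha with rfl | ha'
  · simp [zero_rpow hp0.ne', zero_rpow (by positivity : p/2 ≠ 0)]
  rcases eq_or_lt_of_le hb with rfl | hb'
  · simp [zero_rpow hp0.ne', zero_rpow (by positivity : p/2 ≠ 0)]
  rcases le_total b a with h | h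
  · exact two_var_aux hp hb' h
  · have := two_var_aux hp ha' h
    rw [mul_comm b a, add_comm b a] at this
    linarith

lemma sum_rpow_le_rpow_sum {q : ℝ} (hq : 1 ≤ q) {ι : Type*} (s : Finset ι) (f : ι → ℝ)
    (hf : ∀ i, 0 ≤ f i) : ∑ i ∈ s, f i ^ q ≤ (∑ i ∈ s, f i) ^ q := by
  have hbin : ∀ x y : ℝ, 0 ≤ x → 0 ≤ y → x ^ q + y ^ q ≤ (x + y) ^ q := by
    intro x y hx hy
    lift x to NNReal using hx
    lift y to NNReal using hy
    exact_mod_cast NNReal.add_rpow_le_rpow_add x y hq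
  induction s using Finset.cons_induction with
  | empty => simp [zero_rpow (by linarith : q ≠ 0)]
  | cons a s has ih =>
    rw [Finset.sum_cons, Finset.sum_cons]
    calc f a ^ q + ∑ i ∈ s, f i ^ q ≤ f a ^ q + (∑ i ∈ s, f i) ^ q := by linarith
      _ ≤ (f a + ∑ i ∈ s, f i) ^ q := hbin _ _ (hf a) (Finset.sum_nonneg fun i _ => hf i)

lemma rpow_sum_le_sum_rpow {q : ℝ} (hq0 : 0 < q) (hq1 : q ≤ 1) {ι : Type*} (s : Finset ι)
    (f : ι → ℝ) (hf : ∀ i, 0 ≤ f i) : (∑ i ∈ s, f i) ^ q ≤ ∑ i ∈ s, f i ^ q := by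
  have hbin : ∀ x y : ℝ, 0 ≤ x → 0 ≤ y → (x + y) ^ q ≤ x ^ q + y ^ q := by
    intro x y hx hy
    lift x to NNReal using hx
    lift y to NNReal using hy
    exact_mod_cast NNReal.rpow_add_le_add_rpow x y hq0.le hq1
  induction s using Finset.cons_induction with
  | empty => simp [zero_rpow hq0.ne']
  | cons a s has ih =>
    rw [Finset.sum_cons, Finset.sum_cons]
    calc (f a + ∑ i ∈ s, f i) ^ q ≤ f a ^ q + (∑ i ∈ s, f i) ^ q :=
          hbin _ _ (hf a) (Finset.sum_nonneg fun i _ => hf i)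
      _ ≤ f a ^ q + ∑ i ∈ s, f i ^ q := by linarith

lemma double_sum_split {n : ℕ} (f : Fin (n+1) → Fin (n+1) → ℝ) :
    (∑ i : Fin (n+1), ∑ j : Fin (n+1), if i < j then f i j else 0)
      = (∑ i : Fin n, ∑ j : Fin n, if i < j then f i.castSucc j.castSucc else 0)
        + ∑ i : Fin n, f i.castSucc (Fin.last n) := by
  have h0 : ∀ j : Fin (n+1), ¬ (Fin.last n < j) := fun j => (Fin.le_last j).not_gt
  rw [Fin.sum_univ_castSucc
    (f := fun i : Fin (n+1) => ∑ j : Fin (n+1), if i < j then f i j else 0)]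
  simp only [h0, if_false, Finset.sum_const_zero, add_zero]
  rw [Finset.sum_congr rfl (fun i _ => Fin.sum_univ_castSucc
    (f := fun j : Fin (n+1) => if i.castSucc < j then f i.castSucc j else 0))]
  simp [Fin.castSucc_lt_castSucc_iff, Fin.castSucc_lt_last, Finset.sum_add_distrib]

lemma main_aux (p : ℝ) (hp : p ∈ Set.Ioc (0 : ℝ) 1 ∪ Set.Ici (2 : ℝ)) :
    ∀ (n : ℕ) (a : Fin n → ℝ), (∀ i, 0 ≤ a i) →
    (∑ j, a j ^ p) +
        ((2 : ℝ) ^ p - 2) *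
          (∑ i : Fin n, ∑ j : Fin n, if i < j then (a i * a j) ^ (p / 2) else 0) ≤
      (∑ j, a j) ^ p := by
  have hp0 : 0 < p := by
    rcases hp with hp | hp
    · exact hp.1
    · simp only [Set.mem_Ici] at hp; linarith
  intro n
  induction n with
  | zero => intro a ha; simp [zero_rpow hp0.ne']
  | succ n IH =>
    intro a ha
    set b : Fin n → ℝ := fun i => a i.castSucc with hb
    set c : ℝ := a (Fin.last n) with hc
    have hbnn : ∀ i, 0 ≤ b i := fun i => ha _
    have hcnn : 0 ≤ c := ha _
    set T : ℝ := ∑ i, b i with hT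
    have hTnn : 0 ≤ T := Finset.sum_nonneg fun i _ => hbnn i
    have hsum : ∑ j, a j = T + c := Fin.sum_univ_castSucc a
    have hsump : ∑ j, a j ^ p = (∑ i, b i ^ p) + c ^ p :=
      Fin.sum_univ_castSucc (fun j => a j ^ p)
    have hdd := double_sum_split (fun i j => (a i * a j) ^ (p / 2))
    have hIH := IH b hbnn
    -- bound the cross-column term
    have hcol : ((2:ℝ) ^ p - 2) * (∑ i, (b i * c) ^ (p / 2))
        ≤ ((2:ℝ) ^ p - 2) * ((T * c) ^ (p / 2)) := by
      have hBe : ∑ i, (b i * c) ^ (p / 2) = (∑ i, b i ^ (p / 2)) * c ^ (p / 2) := by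
        rw [Finset.sum_mul]
        exact Finset.sum_congr rfl fun i _ => mul_rpow (hbnn i) hcnn
      have hTe : (T * c) ^ (p / 2) = T ^ (p / 2) * c ^ (p / 2) := mul_rpow hTnn hcnn
      have hcq : (0:ℝ) ≤ c ^ (p / 2) := rpow_nonneg hcnn _
      rw [hBe, hTe]
      rcases hp with hple | hpge
      · -- p ≤ 1 : coefficient nonpositive, sum superadditive... subadditive
        have hK : (2:ℝ) ^ p - 2 ≤ 0 := by
          have : (2:ℝ) ^ p ≤ (2:ℝ) ^ (1:ℝ) :=
            rpow_le_rpow_of_exponent_le (by norm_num) hple.2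
          simpa using this
        have hq : T ^ (p / 2) ≤ ∑ i, b i ^ (p / 2) :=
          rpow_sum_le_sum_rpow (by positivity) (by linarith [hple.2]) _ _ hbnn
        have := mul_le_mul_of_nonneg_right hq hcq
        exact mul_le_mul_of_nonpos_left this hK
      · -- p ≥ 2 : coefficient nonnegative, superadditivity
        simp only [Set.mem_Ici] at hpge
        have hK : 0 ≤ (2:ℝ) ^ p - 2 := by
          have : (2:ℝ) ^ (1:ℝ) ≤ (2:ℝ) ^ p :=
            rpow_le_rpow_of_exponent_le (by norm_num) (by linarith)
          simpa using this
        have hq : ∑ i, b i ^ (p / 2) ≤ T ^ (p / 2) :=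
          sum_rpow_le_rpow_sum (by linarith) _ _ hbnn
        have := mul_le_mul_of_nonneg_right hq hcq
        exact mul_le_mul_of_nonneg_left this hK
    -- combine
    have htv : T ^ p + c ^ p + ((2:ℝ) ^ p - 2) * (T * c) ^ (p / 2) ≤ (T + c) ^ p :=
      two_var hp hTnn hcnn
    rw [hsum, hsump, hdd]
    nlinarith [hIH]

/-- Remark (pin) reversed, for `p ∈ (0,1] ∪ [2,∞)` and finitely many nonnegative reals:
`(∑_j a_j)^p ≥ ∑_j a_j^p + (2^p - 2) ∑_{i<j} (a_i a_j)^{p/2}`. -/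
theorem statement17 (p : ℝ) (hp : p ∈ Set.Ioc (0 : ℝ) 1 ∪ Set.Ici (2 : ℝ))
    (n : ℕ) (hn : 1 ≤ n) (a : Fin n → ℝ) (ha : ∀ i, 0 ≤ a i) :
    (∑ j, a j ^ p) +
        ((2 : ℝ) ^ p - 2) *
          (∑ i : Fin n, ∑ j : Fin n, if i < j then (a i * a j) ^ (p / 2) else 0) ≤
      (∑ j, a j) ^ p :=
  main_aux p hp n a ha
end

section
/- Let Ω := {(x,y,z) ∈ ℝ³ : x ≥ 0, y ≥ 0, 0 ≤ z ≤ √(xy)} and for p ≠ 0 define the one-homogeneous function F_p : Ω → ℝ by F_p(x,y,z) := ((x+y)/2) · ( (1+√(1−w²))^{1/p} + (1−√(1−w²))^{1/p} )^p where w := 2z/(x+y) for x+y > 0, and F_p(0,0,0) := 0. Then F_p is concave on Ω when p ∈ (0,1] ∪ [2,∞), and F_p is convex on Ω when p ∈ (−∞,0) ∪ (1,2). -/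
open Real Set

/-- The one-homogeneous function `F_p` on the cone `Ω = {x,y ≥ 0, 0 ≤ z ≤ √(xy)}`:
`F_p(x,y,z) = ((x+y)/2) ((1+√(1-w²))^{1/p} + (1-√(1-w²))^{1/p})^p` with `w = 2z/(x+y)`,
`F_p(0,0,0) = 0`, and `F_p(x,y,0) = 0` for `p < 0` (the limiting value). -/
noncomputable def Fp (p : ℝ) (u : ℝ × ℝ × ℝ) : ℝ :=
  if u.1 + u.2.1 = 0 then 0
  else if p < 0 ∧ u.2.2 = 0 then 0
  else
    ((u.1 + u.2.1) / 2) *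
      ((1 + Real.sqrt (1 - (2 * u.2.2 / (u.1 + u.2.1)) ^ 2)) ^ (1 / p) +
        (1 - Real.sqrt (1 - (2 * u.2.2 / (u.1 + u.2.1)) ^ 2)) ^ (1 / p)) ^ p

/-!
Where `x + y > 0`, `F_p(x,y,z) = (x+y) φ_p(z/(x+y))` with `φ_p = profile p` on `[0, 1/2]`, so `F_p`
is a perspective of `φ_p`. A positively homogeneous superadditive function on a convex cone is
concave, and superadditivity of `(a, z) ↦ a φ(z/a)` follows from concavity of `φ`; so `F_p` is
concave (convex) as soon as `φ_p` is.

With `s = √(1-4t²)`, `A = 1+s`, `B = 1-s` and `m = 2/p - 1`, a direct computation gives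
`φ_p'' = -(2/s³) (A^{1/p} + B^{1/p})^{p-2} (A^m - B^m - m(A-B)(AB)^{(m-1)/2})`, and for
`A = e^{c+d}`, `B = e^{c-d}` the last factor is `2e^{mc} (sinh(md) - m sinh d)`. Convexity of `sinh`
on `[0, ∞)` makes it nonnegative for `m ≥ 1` or `-1 ≤ m ≤ 0`, i.e. `p ∈ (0,1] ∪ [2,∞)`, and
nonpositive for `0 ≤ m ≤ 1` or `m ≤ -1`, i.e. `p < 0` or `1 < p < 2`.
-/

theorem ConvexCone.concaveOn_of_superadditive {E : Type*} [AddCommMonoid E] [Module ℝ E]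
    (K : ConvexCone ℝ E) {F : E → ℝ}
    (hsmul : ∀ c : ℝ, 0 < c → ∀ u ∈ K, F (c • u) = c * F u)
    (hadd : ∀ u ∈ K, ∀ v ∈ K, F u + F v ≤ F (u + v)) : ConcaveOn ℝ K F := by
  refine ⟨K.convex, fun u hu v hv a b ha hb hab => ?_⟩
  rcases ha.eq_or_lt with rfl | ha
  · simp [(zero_add b).symm.trans hab]
  rcases hb.eq_or_lt with rfl | hb
  · simp [(add_zero a).symm.trans hab]
  rw [smul_eq_mul, smul_eq_mul, ← hsmul a ha u hu, ← hsmul b hb v hv]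
  exact hadd _ (K.smul_mem ha hu) _ (K.smul_mem hb hv)

theorem ConcaveOn.mul_comp_div_add_le {s : Set ℝ} {φ : ℝ → ℝ} (hφ : ConcaveOn ℝ s φ)
    {a b x y : ℝ} (ha : 0 < a) (hb : 0 < b) (hx : x / a ∈ s) (hy : y / b ∈ s) :
    a * φ (x / a) + b * φ (y / b) ≤ (a + b) * φ ((x + y) / (a + b)) := by
  have hab : 0 < a + b := add_pos ha hb
  have h := hφ.2 hx hy (div_pos ha hab).le (div_pos hb hab).le (by field_simp)
  rw [smul_eq_mul, smul_eq_mul, smul_eq_mul, smul_eq_mul] at h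
  have hxy : a / (a + b) * (x / a) + b / (a + b) * (y / b) = (x + y) / (a + b) := by
    field_simp
  rw [hxy] at h
  calc a * φ (x / a) + b * φ (y / b)
      = (a + b) * (a / (a + b) * φ (x / a) + b / (a + b) * φ (y / b)) := by field_simp
    _ ≤ (a + b) * φ ((x + y) / (a + b)) := mul_le_mul_of_nonneg_left h hab.le

theorem Real.convexOn_sinh : ConvexOn ℝ (Ici 0) sinh := by
  refine convexOn_of_hasDerivWithinAt2_nonneg (convex_Ici 0) continuous_sinh.continuousOn
    (fun x _ => (hasDerivAt_sinh x).hasDerivWithinAt)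
    (fun x _ => (hasDerivAt_cosh x).hasDerivWithinAt) fun x hx => ?_
  rw [interior_Ici] at hx
  exact sinh_nonneg_iff.2 (le_of_lt hx)

theorem Real.sinh_mul_le_mul_sinh {m d : ℝ} (hd : 0 ≤ d) (hm₀ : 0 ≤ m) (hm₁ : m ≤ 1) :
    sinh (m * d) ≤ m * sinh d := by
  simpa using convexOn_sinh.2 (mem_Ici.2 le_rfl) hd (sub_nonneg.2 hm₁) hm₀ (by ring)

theorem Real.mul_sinh_le_sinh_mul {m d : ℝ} (hd : 0 ≤ d) (hm : 1 ≤ m) :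
    m * sinh d ≤ sinh (m * d) := by
  have hm₀ : 0 < m := one_pos.trans_le hm
  have h := sinh_mul_le_mul_sinh (mul_nonneg hm₀.le hd) (inv_nonneg.2 hm₀.le)
    (inv_le_one_of_one_le₀ hm)
  rw [inv_mul_cancel_left₀ hm₀.ne'] at h
  calc m * sinh d ≤ m * (m⁻¹ * sinh (m * d)) := mul_le_mul_of_nonneg_left h hm₀.le
    _ = sinh (m * d) := mul_inv_cancel_left₀ hm₀.ne' _

noncomputable def rpowGap (m A B : ℝ) : ℝ :=
  A ^ m - B ^ m - m * (A - B) * (A * B) ^ ((m - 1) / 2)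

theorem rpowGap_exp (m c d : ℝ) :
    rpowGap m (exp (c + d)) (exp (c - d)) =
      2 * exp (m * c) * (sinh (m * d) - m * sinh d) := by
  have hsplit : ∀ x y z : ℝ, x = y + z → exp x = exp y * exp z := fun x y z h => h ▸ exp_add y z
  have hswap : ∀ a b x y : ℝ, a + b = x + y → exp a * exp b = exp x * exp y := fun a b x y h => by
    rw [← exp_add, ← exp_add, h]
  simp only [rpowGap, rpow_def_of_pos (exp_pos _), ← exp_add, log_exp, sinh_eq]
  rw [show (c + d + (c - d)) * ((m - 1) / 2) = c * (m - 1) by ring]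
  linear_combination hsplit ((c + d) * m) (m * c) (m * d) (by ring)
    - hsplit ((c - d) * m) (m * c) (-(m * d)) (by ring)
    - m * hswap (c + d) (c * (m - 1)) (m * c) d (by ring)
    + m * hswap (c - d) (c * (m - 1)) (m * c) (-d) (by ring)

theorem exists_eq_exp_add_exp_sub {A B : ℝ} (hA : 0 < A) (hB : 0 < B) (hBA : B ≤ A) :
    ∃ c d, 0 ≤ d ∧ A = exp (c + d) ∧ B = exp (c - d) := by
  refine ⟨(log A + log B) / 2, (log A - log B) / 2, ?_, ?_, ?_⟩
  · linarith [log_le_log hB hBA]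
  · rw [show (log A + log B) / 2 + (log A - log B) / 2 = log A by ring, exp_log hA]
  · rw [show (log A + log B) / 2 - (log A - log B) / 2 = log B by ring, exp_log hB]

theorem rpowGap_nonneg {m A B : ℝ} (hB : 0 < B) (hBA : B ≤ A)
    (hm : 1 ≤ m ∨ m ∈ Icc (-1) 0) :
    0 ≤ rpowGap m A B := by
  obtain ⟨c, d, hd, rfl, rfl⟩ := exists_eq_exp_add_exp_sub (hB.trans_le hBA) hB hBA
  rw [rpowGap_exp]
  refine mul_nonneg (by positivity) (sub_nonneg.2 ?_)
  rcases hm with hm | ⟨hm₁, hm₀⟩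
  · exact mul_sinh_le_sinh_mul hd hm
  · have h := sinh_mul_le_mul_sinh hd (neg_nonneg.2 hm₀) (neg_le.1 hm₁)
    simp only [neg_mul, sinh_neg] at h
    linarith

theorem rpowGap_nonpos {m A B : ℝ} (hB : 0 < B) (hBA : B ≤ A)
    (hm : m ∈ Icc 0 1 ∨ m ≤ -1) :
    rpowGap m A B ≤ 0 := by
  obtain ⟨c, d, hd, rfl, rfl⟩ := exists_eq_exp_add_exp_sub (hB.trans_le hBA) hB hBA
  rw [rpowGap_exp]
  refine mul_nonpos_of_nonneg_of_nonpos (by positivity) (sub_nonpos.2 ?_)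
  rcases hm with ⟨hm₀, hm₁⟩ | hm
  · exact sinh_mul_le_mul_sinh hd hm₀ hm₁
  · have h := mul_sinh_le_sinh_mul hd (le_neg.1 hm)
    simp only [neg_mul, sinh_neg] at h
    linarith

-- The cone of positive semidefinite matrices `[[x, z], [z, y]]` with `z ≥ 0`.
def omegaCone : ConvexCone ℝ (ℝ × ℝ × ℝ) where
  carrier := {u | 0 ≤ u.1 ∧ 0 ≤ u.2.1 ∧ 0 ≤ u.2.2 ∧ u.2.2 ≤ √(u.1 * u.2.1)}
  smul_mem' := by
    rintro c hc u ⟨hx, hy, hz, hzxy⟩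
    refine ⟨mul_nonneg hc.le hx, mul_nonneg hc.le hy, mul_nonneg hc.le hz, ?_⟩
    calc c * u.2.2 ≤ c * √(u.1 * u.2.1) := mul_le_mul_of_nonneg_left hzxy hc.le
      _ = √((c * u.1) * (c * u.2.1)) := by
        rw [mul_mul_mul_comm, sqrt_mul (mul_self_nonneg c), sqrt_mul_self hc.le]
  add_mem' := by
    rintro u ⟨hx, hy, hz, hzxy⟩ v ⟨hx', hy', hz', hzxy'⟩
    refine ⟨add_nonneg hx hx', add_nonneg hy hy', add_nonneg hz hz', ?_⟩
    have h := (le_sqrt hz (mul_nonneg hx hy)).1 hzxy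
    have h' := (le_sqrt hz' (mul_nonneg hx' hy')).1 hzxy'
    show u.2.2 + v.2.2 ≤ √((u.1 + v.1) * (u.2.1 + v.2.1))
    refine (le_sqrt (add_nonneg hz hz') (by positivity)).2 ?_
    -- the cross term: `(2 z z')² ≤ 4 (x y') (x' y) ≤ (x y' + x' y)²`
    nlinarith [sq_nonneg (u.1 * v.2.1 - v.1 * u.2.1), mul_nonneg hx hy', mul_nonneg hx' hy,
      mul_nonneg hz hz']

theorem eq_zero_of_mem_omegaCone {u : ℝ × ℝ × ℝ} (hu : u ∈ omegaCone) (h : u.1 + u.2.1 = 0) :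
    u = 0 := by
  obtain ⟨hx, hy, hz, hzxy⟩ := hu
  have hx0 : u.1 = 0 := by linarith
  have hy0 : u.2.1 = 0 := by linarith
  rw [hx0, zero_mul, sqrt_zero] at hzxy
  exact Prod.ext hx0 (Prod.ext hy0 (hzxy.antisymm hz))

theorem div_mem_Icc_of_mem_omegaCone {u : ℝ × ℝ × ℝ} (hu : u ∈ omegaCone) (h : 0 < u.1 + u.2.1) :
    u.2.2 / (u.1 + u.2.1) ∈ Icc (0 : ℝ) (1 / 2) := by
  obtain ⟨hx, hy, hz, hzxy⟩ := hu
  refine ⟨div_nonneg hz h.le, (div_le_iff₀ h).2 ?_⟩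
  have hamgm : √(u.1 * u.2.1) ≤ (u.1 + u.2.1) / 2 := by
    rw [sqrt_le_left (by positivity)]; nlinarith [sq_nonneg (u.1 - u.2.1)]
  linarith

theorem concaveOn_perspective {φ : ℝ → ℝ} (hφ : ConcaveOn ℝ (Icc 0 (1 / 2)) φ) :
    ConcaveOn ℝ (omegaCone : Set (ℝ × ℝ × ℝ))
      fun u => (u.1 + u.2.1) * φ (u.2.2 / (u.1 + u.2.1)) := by
  refine omegaCone.concaveOn_of_superadditive (fun c hc u _ => ?_) fun u hu v hv => ?_
  · simp only [Prod.smul_fst, Prod.smul_snd, smul_eq_mul, ← mul_add,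
      mul_div_mul_left _ _ hc.ne']
    ring
  rcases (add_nonneg hu.1 hu.2.1).eq_or_lt with hu0 | hu0
  · simp [eq_zero_of_mem_omegaCone hu hu0.symm]
  rcases (add_nonneg hv.1 hv.2.1).eq_or_lt with hv0 | hv0
  · simp [eq_zero_of_mem_omegaCone hv hv0.symm]
  have h := hφ.mul_comp_div_add_le hu0 hv0 (div_mem_Icc_of_mem_omegaCone hu hu0)
    (div_mem_Icc_of_mem_omegaCone hv hv0)
  simpa only [Prod.fst_add, Prod.snd_add, add_add_add_comm] using h

theorem convexOn_perspective {φ : ℝ → ℝ} (hφ : ConvexOn ℝ (Icc 0 (1 / 2)) φ) :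
    ConvexOn ℝ (omegaCone : Set (ℝ × ℝ × ℝ))
      fun u => (u.1 + u.2.1) * φ (u.2.2 / (u.1 + u.2.1)) := by
  simpa [← neg_concaveOn_iff, Pi.neg_def, ← mul_neg] using concaveOn_perspective hφ.neg

noncomputable def profile (p t : ℝ) : ℝ :=
  if p < 0 ∧ t = 0 then 0
  else ((1 + √(1 - 4 * t ^ 2)) ^ (1 / p) + (1 - √(1 - 4 * t ^ 2)) ^ (1 / p)) ^ p / 2

noncomputable def profileDeriv (p t : ℝ) : ℝ :=
  -2 * t / √(1 - 4 * t ^ 2) *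
    ((1 + √(1 - 4 * t ^ 2)) ^ (1 / p) + (1 - √(1 - 4 * t ^ 2)) ^ (1 / p)) ^ (p - 1) *
    ((1 + √(1 - 4 * t ^ 2)) ^ (1 / p - 1) - (1 - √(1 - 4 * t ^ 2)) ^ (1 / p - 1))

noncomputable def profileDeriv2 (p t : ℝ) : ℝ :=
  -(2 / √(1 - 4 * t ^ 2) ^ 3) *
    ((1 + √(1 - 4 * t ^ 2)) ^ (1 / p) + (1 - √(1 - 4 * t ^ 2)) ^ (1 / p)) ^ (p - 2) *
    rpowGap (2 / p - 1) (1 + √(1 - 4 * t ^ 2)) (1 - √(1 - 4 * t ^ 2))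

section Profile

variable {p t : ℝ}

theorem sqrt_one_sub_four_mul_sq_mem_Ioo (ht : t ∈ Ioo (0 : ℝ) (1 / 2)) :
    √(1 - 4 * t ^ 2) ∈ Ioo 0 1 := by
  obtain ⟨ht₀, ht₁⟩ := ht
  exact ⟨sqrt_pos.2 (by nlinarith), (sqrt_lt' one_pos).2 (by nlinarith)⟩

theorem hasDerivAt_sqrt_one_sub_four_mul_sq (ht : 0 < 1 - 4 * t ^ 2) :
    HasDerivAt (fun t => √(1 - 4 * t ^ 2)) (-(4 * t) / √(1 - 4 * t ^ 2)) t := by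
  have h := (((hasDerivAt_pow 2 t).const_mul 4).const_sub 1).sqrt ht.ne'
  convert h using 1
  field_simp
  ring

theorem hasDerivAt_profile (hp : p ≠ 0) (ht : t ∈ Ioo (0 : ℝ) (1 / 2)) :
    HasDerivAt (profile p) (profileDeriv p t) t := by
  obtain ⟨hs₀, hs₁⟩ := sqrt_one_sub_four_mul_sq_mem_Ioo ht
  have hS := hasDerivAt_sqrt_one_sub_four_mul_sq (t := t) (by nlinarith [ht.1, ht.2])
  have hA : 0 < 1 + √(1 - 4 * t ^ 2) := by linarith
  have hB : 0 < 1 - √(1 - 4 * t ^ 2) := by linarith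
  have hN : 0 < (1 + √(1 - 4 * t ^ 2)) ^ (1 / p) + (1 - √(1 - 4 * t ^ 2)) ^ (1 / p) := by
    positivity
  have h := ((((hS.const_add 1).rpow_const (p := 1 / p) (Or.inl hA.ne')).add
    ((hS.const_sub 1).rpow_const (p := 1 / p) (Or.inl hB.ne'))).rpow_const
    (p := p) (Or.inl hN.ne')).div_const 2
  refine (h.congr_deriv ?_).congr_of_eventuallyEq ?_
  · simp only [Pi.add_apply, profileDeriv]
    field_simp
    ring
  · filter_upwards [eventually_ne_nhds ht.1.ne'] with y hy
    simp [profile, hy]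

theorem hasDerivAt_profileDeriv (hp : p ≠ 0) (ht : t ∈ Ioo (0 : ℝ) (1 / 2)) :
    HasDerivAt (profileDeriv p) (profileDeriv2 p t) t := by
  obtain ⟨hs₀, hs₁⟩ := sqrt_one_sub_four_mul_sq_mem_Ioo ht
  have hsq : √(1 - 4 * t ^ 2) ^ 2 = 1 - 4 * t ^ 2 := sq_sqrt (by nlinarith [ht.1, ht.2])
  have hS := hasDerivAt_sqrt_one_sub_four_mul_sq (t := t) (by nlinarith [ht.1, ht.2])
  have hA : 0 < 1 + √(1 - 4 * t ^ 2) := by linarith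
  have hB : 0 < 1 - √(1 - 4 * t ^ 2) := by linarith
  have hN : 0 < (1 + √(1 - 4 * t ^ 2)) ^ (1 / p) + (1 - √(1 - 4 * t ^ 2)) ^ (1 / p) := by
    positivity
  have hAq := (hS.const_add 1).rpow_const (p := 1 / p) (Or.inl hA.ne')
  have hBq := (hS.const_sub 1).rpow_const (p := 1 / p) (Or.inl hB.ne')
  have h := ((((hasDerivAt_id t).const_mul (-2)).div hS hs₀.ne').mul
    ((hAq.add hBq).rpow_const (p := p - 1) (Or.inl hN.ne'))).mul
    (((hS.const_add 1).rpow_const (p := 1 / p - 1) (Or.inl hA.ne')).sub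
      ((hS.const_sub 1).rpow_const (p := 1 / p - 1) (Or.inl hB.ne')))
  refine h.congr_deriv ?_
  simp only [Pi.add_apply, Pi.sub_apply, Pi.mul_apply, Pi.div_apply, id, profileDeriv2, rpowGap]
  set s := √(1 - 4 * t ^ 2)
  have ht2 : t ^ 2 = (1 - s ^ 2) / 4 := by linarith
  rw [show (2 / p - 1 - 1) / 2 = 1 / p - 1 by ring, show p - 2 = p - 1 - 1 by ring,
    show 2 / p - 1 = 1 / p + 1 / p - 1 by ring, mul_rpow hA.le hB.le]
  simp only [rpow_sub_one hA.ne', rpow_sub_one hB.ne', rpow_sub_one hN.ne', rpow_add hA,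
    rpow_add hB]
  field_simp
  ring_nf
  rw [ht2]
  ring

theorem profileDeriv2_nonpos (hp : p ∈ Ioc (0 : ℝ) 1 ∪ Ici 2) (ht : t ∈ Ioo (0 : ℝ) (1 / 2)) :
    profileDeriv2 p t ≤ 0 := by
  obtain ⟨hs₀, hs₁⟩ := sqrt_one_sub_four_mul_sq_mem_Ioo ht
  have hm : 1 ≤ 2 / p - 1 ∨ 2 / p - 1 ∈ Icc (-1) 0 := by
    rcases hp with ⟨hp₀, hp₁⟩ | hp
    · left
      rw [le_sub_iff_add_le, le_div_iff₀ hp₀]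
      linarith
    · have hp₀ : 0 < p := by linarith [mem_Ici.1 hp]
      right
      constructor
      · linarith [div_pos two_pos hp₀]
      · rw [sub_nonpos, div_le_one hp₀]; exact hp
  refine mul_nonpos_of_nonpos_of_nonneg (mul_nonpos_of_nonpos_of_nonneg ?_ ?_)
    (rpowGap_nonneg (by linarith) (by linarith) hm)
  · exact neg_nonpos.2 (by positivity)
  · exact rpow_nonneg (by positivity) _

theorem profileDeriv2_nonneg (hp : p ∈ Iio (0 : ℝ) ∪ Ioo 1 2) (ht : t ∈ Ioo (0 : ℝ) (1 / 2)) :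
    0 ≤ profileDeriv2 p t := by
  obtain ⟨hs₀, hs₁⟩ := sqrt_one_sub_four_mul_sq_mem_Ioo ht
  have hm : 2 / p - 1 ∈ Icc 0 1 ∨ 2 / p - 1 ≤ -1 := by
    rcases hp with hp | ⟨hp₁, hp₂⟩
    · right
      linarith [div_neg_of_pos_of_neg two_pos (mem_Iio.1 hp)]
    · have hp₀ : 0 < p := by linarith
      left
      constructor
      · rw [sub_nonneg, le_div_iff₀ hp₀]; linarith
      · rw [sub_le_iff_le_add, div_le_iff₀ hp₀]; linarith
  refine mul_nonneg_of_nonpos_of_nonpos (mul_nonpos_of_nonpos_of_nonneg ?_ ?_)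
    (rpowGap_nonpos (by linarith) (by linarith) hm)
  · exact neg_nonpos.2 (by positivity)
  · exact rpow_nonneg (by positivity) _

-- Exhibits the convention `profile p 0 = 0` for `p < 0` as the continuous extension.
theorem profile_eq_of_neg (hp : p < 0) (ht : t ∈ Icc (0 : ℝ) (1 / 2)) :
    profile p t =
      2 * t ^ 2 * ((1 + √(1 - 4 * t ^ 2)) ^ (-1 / p) + (1 - √(1 - 4 * t ^ 2)) ^ (-1 / p)) ^ p := by
  rcases ht.1.eq_or_lt with rfl | ht₀
  · simp [profile, hp]
  have h4 : 0 ≤ 1 - 4 * t ^ 2 := by nlinarith [ht.2]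
  have hs₁ : √(1 - 4 * t ^ 2) < 1 := (sqrt_lt' one_pos).2 (by nlinarith)
  have hA : 0 < 1 + √(1 - 4 * t ^ 2) := by positivity
  have hB : 0 < 1 - √(1 - 4 * t ^ 2) := by linarith
  have hAB : (1 + √(1 - 4 * t ^ 2)) * (1 - √(1 - 4 * t ^ 2)) = 4 * t ^ 2 := by
    nlinarith [sq_sqrt h4]
  rw [profile, if_neg (fun h => ht₀.ne' h.2), ← neg_neg (1 / p), rpow_neg hA.le, rpow_neg hB.le,
    inv_add_inv (by positivity) (by positivity), div_rpow (by positivity) (by positivity),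
    ← mul_rpow hA.le hB.le, hAB,
    ← rpow_mul (by positivity), neg_div, neg_mul, one_div_mul_cancel hp.ne, rpow_neg_one]
  field_simp
  ring

theorem continuous_rpow_add_rpow_rpow {q : ℝ} (hq : 0 ≤ q) (p : ℝ) :
    Continuous fun t => ((1 + √(1 - 4 * t ^ 2)) ^ q + (1 - √(1 - 4 * t ^ 2)) ^ q) ^ p := by
  have hs : Continuous fun t : ℝ => √(1 - 4 * t ^ 2) := by fun_prop
  refine Continuous.rpow_const (((continuous_const.add hs).rpow_const fun _ => Or.inr hq).add
    ((continuous_const.sub hs).rpow_const fun _ => Or.inr hq)) fun t => Or.inl ?_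
  have hs₁ : √(1 - 4 * t ^ 2) ≤ 1 := sqrt_le_one.2 (by nlinarith)
  exact (add_pos_of_pos_of_nonneg (rpow_pos_of_pos (by positivity) q)
    (rpow_nonneg (sub_nonneg.2 hs₁) q)).ne'

theorem continuousOn_profile (hp : p ≠ 0) : ContinuousOn (profile p) (Icc 0 (1 / 2)) := by
  rcases hp.lt_or_gt with hp | hp
  · have hq : 0 ≤ -1 / p := div_nonneg_of_nonpos (by norm_num) hp.le
    exact ((continuous_const.mul (continuous_pow 2)).mul
      (continuous_rpow_add_rpow_rpow hq p)).continuousOn.congr fun t ht => profile_eq_of_neg hp ht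
  · have hprofile : profile p = fun t =>
        ((1 + √(1 - 4 * t ^ 2)) ^ (1 / p) + (1 - √(1 - 4 * t ^ 2)) ^ (1 / p)) ^ p / 2 := by
      funext t
      simp [profile, hp.not_gt]
    rw [hprofile]
    exact ((continuous_rpow_add_rpow_rpow (one_div_pos.2 hp).le p).div_const 2).continuousOn

theorem concaveOn_profile (hp : p ∈ Ioc (0 : ℝ) 1 ∪ Ici 2) :
    ConcaveOn ℝ (Icc 0 (1 / 2)) (profile p) := by
  have hp₀ : p ≠ 0 := by
    rcases hp with ⟨h, -⟩ | h
    exacts [h.ne', (two_pos.trans_le h).ne']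
  refine concaveOn_of_hasDerivWithinAt2_nonpos (f' := profileDeriv p)
    (f'' := profileDeriv2 p) (convex_Icc _ _) (continuousOn_profile hp₀) ?_ ?_ ?_ <;>
    simp only [interior_Icc]
  · exact fun t ht => (hasDerivAt_profile hp₀ ht).hasDerivWithinAt
  · exact fun t ht => (hasDerivAt_profileDeriv hp₀ ht).hasDerivWithinAt
  · exact fun t ht => profileDeriv2_nonpos hp ht

theorem convexOn_profile (hp : p ∈ Iio (0 : ℝ) ∪ Ioo 1 2) :
    ConvexOn ℝ (Icc 0 (1 / 2)) (profile p) := by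
  have hp₀ : p ≠ 0 := by
    rcases hp with h | ⟨h, -⟩
    exacts [h.ne, (one_pos.trans h).ne']
  refine convexOn_of_hasDerivWithinAt2_nonneg (f' := profileDeriv p)
    (f'' := profileDeriv2 p) (convex_Icc _ _) (continuousOn_profile hp₀) ?_ ?_ ?_ <;>
    simp only [interior_Icc]
  · exact fun t ht => (hasDerivAt_profile hp₀ ht).hasDerivWithinAt
  · exact fun t ht => (hasDerivAt_profileDeriv hp₀ ht).hasDerivWithinAt
  · exact fun t ht => profileDeriv2_nonneg hp ht

end Profile

theorem Fp_eq_perspective (p : ℝ) :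
    Fp p = fun u => (u.1 + u.2.1) * profile p (u.2.2 / (u.1 + u.2.1)) := by
  funext u
  by_cases h : u.1 + u.2.1 = 0
  · simp [Fp, h]
  have hz : u.2.2 / (u.1 + u.2.1) = 0 ↔ u.2.2 = 0 := by simp [h]
  rw [Fp, profile, if_neg h]
  simp only [hz, mul_div_assoc, mul_pow]
  split_ifs <;> ring_nf

/-- `F_p` is concave on `Ω` for `p ∈ (0,1] ∪ [2,∞)`, and convex on `Ω` for
`p ∈ (-∞,0) ∪ (1,2)`. -/
theorem statement18 (p : ℝ)
    (Ω : Set (ℝ × ℝ × ℝ))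
    (hΩ : Ω = {u : ℝ × ℝ × ℝ |
      0 ≤ u.1 ∧ 0 ≤ u.2.1 ∧ 0 ≤ u.2.2 ∧ u.2.2 ≤ Real.sqrt (u.1 * u.2.1)}) :
    (p ∈ Set.Ioc (0 : ℝ) 1 ∪ Set.Ici (2 : ℝ) → ConcaveOn ℝ Ω (Fp p)) ∧
    (p ∈ Set.Iio (0 : ℝ) ∪ Set.Ioo (1 : ℝ) 2 → ConvexOn ℝ Ω (Fp p)) := by
  subst hΩ
  rw [Fp_eq_perspective]
  exact ⟨fun hp => concaveOn_perspective (concaveOn_profile hp),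
    fun hp => convexOn_perspective (convexOn_profile hp)⟩
end

section
/- Let Ω := {(x,y,z) ∈ ℝ³ : x ≥ 0, y ≥ 0, 0 ≤ z ≤ √(xy)} and for p > 0 define the one-homogeneous function G_p : Ω → ℝ by G_p(x,y,z) := x + y + ( (v^{1/p} + v^{−1/p})^p − (v + v^{−1}) ) · z, where v := min{x/z, y/z, 1} for z > 0 and v := 1 for z = 0. Then G_p is concave on Ω when p ∈ (1,2), and G_p is convex on Ω when p ∈ (0,1] ∪ [2,∞). -/
/-!
Write `G_p(x, y, z) = x + y + ψ_p(v) z` with `ψ_p(s) = (s^{1/p} + s^{-1/p})^p - s - s⁻¹`.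
On `(0, 1]` the function `ψ_p` is concave for `1 < p < 2` and convex for `p ≤ 1` or `p ≥ 2`,
and `ψ_p'(1) = 0`. The tangent line of `ψ_p` at `s ∈ (0, 1]` yields the linear function
`x + y + ψ_p(s) z + ψ_p'(s) (x - s z)`, which lies above (resp. below) `G_p` on all of `Ω` and
agrees with it where `x ≤ y` and `min {x/z, 1} = s`. Together with the symmetry in `x, y`, this
exhibits `G_p` as an infimum (resp. supremum) of linear functions, attained at every point of `Ω`.
-/

open Real Set

/-- The one-homogeneous function `G_p` (for `p > 0`) on the cone `Ω = {x,y ≥ 0, 0 ≤ z ≤ √(xy)}`: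
`G_p(x,y,z) = x + y + ((v^{1/p} + v^{-1/p})^p - (v + v⁻¹)) z`, where
`v = min{x/z, y/z, 1}` for `z > 0` and `v = 1` for `z = 0`. -/
noncomputable def Gp (p : ℝ) (u : ℝ × ℝ × ℝ) : ℝ :=
  let v : ℝ := if u.2.2 = 0 then 1 else min (min (u.1 / u.2.2) (u.2.1 / u.2.2)) 1
  u.1 + u.2.1 + ((v ^ (1 / p) + v ^ (-(1 / p))) ^ p - (v + v⁻¹)) * u.2.2

lemma mapsTo_rpow_Ioc {r : ℝ} (hr : 0 ≤ r) : MapsTo (· ^ r) (Ioc (0 : ℝ) 1) (Ioc 0 1) :=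
  fun _ hs ↦ ⟨rpow_pos_of_pos hs.1 _, rpow_le_one hs.1.le hs.2 hr⟩

lemma monotoneOn_of_forall_hasDerivAt_nonneg {D : Set ℝ} (hD : Convex ℝ D) {f f' : ℝ → ℝ}
    (hf : ∀ x ∈ D, HasDerivAt f (f' x) x) (hf' : ∀ x ∈ D, 0 ≤ f' x) : MonotoneOn f D :=
  monotoneOn_of_hasDerivWithinAt_nonneg hD
    (fun x hx ↦ (hf x hx).continuousAt.continuousWithinAt)
    (fun x hx ↦ (hf x (interior_subset hx)).hasDerivWithinAt)
    (fun x hx ↦ hf' x (interior_subset hx))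

lemma antitoneOn_of_forall_hasDerivAt_nonpos {D : Set ℝ} (hD : Convex ℝ D) {f f' : ℝ → ℝ}
    (hf : ∀ x ∈ D, HasDerivAt f (f' x) x) (hf' : ∀ x ∈ D, f' x ≤ 0) : AntitoneOn f D :=
  antitoneOn_of_hasDerivWithinAt_nonpos hD
    (fun x hx ↦ (hf x hx).continuousAt.continuousWithinAt)
    (fun x hx ↦ (hf x (interior_subset hx)).hasDerivWithinAt)
    (fun x hx ↦ hf' x (interior_subset hx))

lemma ConcaveOn.le_tangent_of_hasDerivAt {S : Set ℝ} {f : ℝ → ℝ} {f' x y : ℝ}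
    (hf : ConcaveOn ℝ S f) (hx : x ∈ S) (hy : y ∈ S) (hd : HasDerivAt f f' x) :
    f y ≤ f x + f' * (y - x) := by
  rcases lt_trichotomy x y with hxy | rfl | hyx
  · have := hf.slope_le_of_hasDerivAt hx hy hxy hd
    rw [slope_def_field, div_le_iff₀ (sub_pos.2 hxy)] at this
    linarith
  · simp
  · have := hf.le_slope_of_hasDerivAt hy hx hyx hd
    rw [slope_def_field, le_div_iff₀ (sub_pos.2 hyx)] at this
    linarith

lemma ConvexOn.tangent_le_of_hasDerivAt {S : Set ℝ} {f : ℝ → ℝ} {f' x y : ℝ}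
    (hf : ConvexOn ℝ S f) (hx : x ∈ S) (hy : y ∈ S) (hd : HasDerivAt f f' x) :
    f x + f' * (y - x) ≤ f y := by
  have := hf.neg.le_tangent_of_hasDerivAt hx hy hd.neg
  simp only [Pi.neg_apply] at this
  linarith

lemma ConcaveOn.of_forall_exists_concaveOn_ge {𝕜 E β : Type*} [Semiring 𝕜] [PartialOrder 𝕜]
    [AddCommMonoid E] [AddCommMonoid β] [PartialOrder β] [IsOrderedAddMonoid β] [Module 𝕜 E]
    [Module 𝕜 β] [PosSMulMono 𝕜 β] {s : Set E} {g : E → β} (hs : Convex 𝕜 s)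
    (h : ∀ m ∈ s, ∃ f : E → β, ConcaveOn 𝕜 s f ∧ (∀ u ∈ s, g u ≤ f u) ∧ f m = g m) :
    ConcaveOn 𝕜 s g := by
  refine ⟨hs, fun x hx y hy a b ha hb hab ↦ ?_⟩
  obtain ⟨f, hf, hgf, hfg⟩ := h _ (hs hx hy ha hb hab)
  calc a • g x + b • g y ≤ a • f x + b • f y := by
        gcongr
        exacts [hgf x hx, hgf y hy]
    _ ≤ f (a • x + b • y) := hf.2 hx hy ha hb hab
    _ = g (a • x + b • y) := hfg

lemma ConvexOn.of_forall_exists_convexOn_le {𝕜 E β : Type*} [Semiring 𝕜] [PartialOrder 𝕜]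
    [AddCommMonoid E] [AddCommMonoid β] [PartialOrder β] [IsOrderedAddMonoid β] [Module 𝕜 E]
    [Module 𝕜 β] [PosSMulMono 𝕜 β] {s : Set E} {g : E → β} (hs : Convex 𝕜 s)
    (h : ∀ m ∈ s, ∃ f : E → β, ConvexOn 𝕜 s f ∧ (∀ u ∈ s, f u ≤ g u) ∧ f m = g m) :
    ConvexOn 𝕜 s g :=
  ConcaveOn.of_forall_exists_concaveOn_ge (β := βᵒᵈ) hs h

noncomputable def psi (p s : ℝ) : ℝ := (s ^ (1 / p) + s ^ (-(1 / p))) ^ p - s - s⁻¹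

-- With `w = s^{2/p}` one has `ψ_p'(s) = η_p(w) - 1` and `η_p'(w) = w^{-p-1} (χ_p(w) - p)`, while
-- `χ_p'(w) = (p-1)(p-2)(1-w)(1+w)^{p-3}`; so the sign of `(p-1)(p-2)` decides whether `ψ_p'` is
-- antitone or monotone on `(0, 1]`.
noncomputable def chi (p w : ℝ) : ℝ := (1 + w) ^ (p - 2) * (p + (2 - p) * w)

noncomputable def eta (p w : ℝ) : ℝ := w ^ (-p) * ((1 + w) ^ (p - 1) * (w - 1) + 1)

noncomputable def psiDeriv (p s : ℝ) : ℝ := eta p (s ^ (2 / p)) - 1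

section

variable {p : ℝ}

lemma hasDerivAt_chi {w : ℝ} (hw : 0 < 1 + w) :
    HasDerivAt (chi p) ((p - 1) * (p - 2) * (1 - w) * (1 + w) ^ (p - 3)) w := by
  have hpow : HasDerivAt (fun w : ℝ ↦ (1 + w) ^ (p - 2)) (1 * (p - 2) * (1 + w) ^ (p - 2 - 1)) w :=
    ((hasDerivAt_id w).const_add 1).rpow_const (Or.inl hw.ne')
  have hlin : HasDerivAt (fun w : ℝ ↦ p + (2 - p) * w) ((2 - p) * 1) w :=
    ((hasDerivAt_id w).const_mul (2 - p)).const_add p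
  refine (hpow.mul hlin).congr_deriv ?_
  rw [show p - 2 - 1 = p - 3 by ring, show p - 2 = p - 3 + 1 by ring, rpow_add_one hw.ne']
  ring

lemma chi_zero : chi p 0 = p := by simp [chi]

lemma chi_le (hc : (p - 1) * (p - 2) ≤ 0) {w : ℝ} (hw : w ∈ Icc (0 : ℝ) 1) : chi p w ≤ p := by
  have hanti : AntitoneOn (chi p) (Icc 0 1) :=
    antitoneOn_of_forall_hasDerivAt_nonpos (convex_Icc 0 1)
      (fun w hw ↦ hasDerivAt_chi (by linarith [hw.1])) fun w hw ↦
        mul_nonpos_of_nonpos_of_nonneg (mul_nonpos_of_nonpos_of_nonneg hc (by linarith [hw.2]))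
          (rpow_nonneg (by linarith [hw.1]) _)
  simpa [chi_zero] using hanti ⟨le_rfl, zero_le_one⟩ hw hw.1

lemma le_chi (hc : 0 ≤ (p - 1) * (p - 2)) {w : ℝ} (hw : w ∈ Icc (0 : ℝ) 1) : p ≤ chi p w := by
  have hmono : MonotoneOn (chi p) (Icc 0 1) :=
    monotoneOn_of_forall_hasDerivAt_nonneg (convex_Icc 0 1)
      (fun w hw ↦ hasDerivAt_chi (by linarith [hw.1])) fun w hw ↦
        mul_nonneg (mul_nonneg hc (by linarith [hw.2])) (rpow_nonneg (by linarith [hw.1]) _)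
  simpa [chi_zero] using hmono ⟨le_rfl, zero_le_one⟩ hw hw.1

lemma hasDerivAt_eta {w : ℝ} (hw : 0 < w) :
    HasDerivAt (eta p) (w ^ (-p - 1) * (chi p w - p)) w := by
  have h1w : 0 < 1 + w := by linarith
  have hneg : HasDerivAt (fun w : ℝ ↦ w ^ (-p)) (-p * w ^ (-p - 1)) w :=
    hasDerivAt_rpow_const (Or.inl hw.ne')
  have hpow : HasDerivAt (fun w : ℝ ↦ (1 + w) ^ (p - 1)) (1 * (p - 1) * (1 + w) ^ (p - 1 - 1)) w :=
    ((hasDerivAt_id w).const_add 1).rpow_const (Or.inl h1w.ne')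
  refine (hneg.mul ((hpow.mul ((hasDerivAt_id w).sub_const 1)).add_const 1)).congr_deriv ?_
  have e1 : (1 + w) ^ (p - 1) = (1 + w) ^ (p - 2) * (1 + w) := by
    rw [← rpow_add_one h1w.ne']; congr 1; ring
  have e2 : w ^ (-p) = w ^ (-p - 1) * w := by
    rw [← rpow_add_one hw.ne']; congr 1; ring
  simp only [Pi.mul_apply, id]
  rw [chi, e1, e2, show p - 1 - 1 = p - 2 by ring]
  ring

lemma eta_one : eta p 1 = 1 := by simp [eta]

lemma antitoneOn_eta (hc : (p - 1) * (p - 2) ≤ 0) : AntitoneOn (eta p) (Ioc 0 1) :=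
  antitoneOn_of_forall_hasDerivAt_nonpos (convex_Ioc 0 1) (fun _ hw ↦ hasDerivAt_eta hw.1)
    fun _ hw ↦ mul_nonpos_of_nonneg_of_nonpos (rpow_nonneg hw.1.le _)
      (sub_nonpos.2 (chi_le hc (Ioc_subset_Icc_self hw)))

lemma monotoneOn_eta (hc : 0 ≤ (p - 1) * (p - 2)) : MonotoneOn (eta p) (Ioc 0 1) :=
  monotoneOn_of_forall_hasDerivAt_nonneg (convex_Ioc 0 1) (fun _ hw ↦ hasDerivAt_eta hw.1)
    fun _ hw ↦
      mul_nonneg (rpow_nonneg hw.1.le _) (sub_nonneg.2 (le_chi hc (Ioc_subset_Icc_self hw)))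

lemma hasDerivAt_psi (hp : p ≠ 0) {s : ℝ} (hs : 0 < s) : HasDerivAt (psi p) (psiDeriv p s) s := by
  have hd : HasDerivAt (fun s : ℝ ↦ s ^ (1 / p) + s ^ (-(1 / p)))
      (1 / p * s ^ (1 / p - 1) + -(1 / p) * s ^ (-(1 / p) - 1)) s :=
    (hasDerivAt_rpow_const (Or.inl hs.ne')).add (hasDerivAt_rpow_const (Or.inl hs.ne'))
  refine (((hd.rpow_const (Or.inl (by positivity))).sub (hasDerivAt_id s)).sub
    (hasDerivAt_inv hs.ne')).congr_deriv ?_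
  rw [rpow_neg hs.le]
  set t := s ^ (1 / p) with ht_def
  have ht : 0 < t := by positivity
  have htp : t ^ p = s := by rw [ht_def, one_div, rpow_inv_rpow hs.le hp]
  have e1 : s ^ (1 / p - 1) = t * s⁻¹ := by rw [rpow_sub_one hs.ne', div_eq_mul_inv]
  have e2 : s ^ (-(1 / p) - 1) = t⁻¹ * s⁻¹ := by
    rw [rpow_sub_one hs.ne', rpow_neg hs.le, div_eq_mul_inv]
  have e3 : s ^ (2 / p) = t ^ 2 := by
    rw [ht_def, ← rpow_natCast, ← rpow_mul hs.le]; congr 1; ring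
  have e4 : (t ^ 2) ^ (-p) = (s ^ 2)⁻¹ := by
    rw [rpow_neg (by positivity), ← rpow_natCast, ← rpow_mul ht.le, mul_comm, rpow_mul ht.le, htp,
      rpow_natCast]
  have e5 : (1 + t ^ 2) ^ (p - 1) = s * t⁻¹ * (t + t⁻¹) ^ (p - 1) := by
    rw [show 1 + t ^ 2 = t * (t + t⁻¹) by field_simp; ring, mul_rpow ht.le (by positivity),
      rpow_sub_one ht.ne', htp, div_eq_mul_inv]
  rw [psiDeriv, eta, e1, e2, e3, e4, e5]
  field_simp
  ring

lemma psiDeriv_one : psiDeriv p 1 = 0 := by simp [psiDeriv, eta_one]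

lemma antitoneOn_psiDeriv (hp : 0 < p) (hc : (p - 1) * (p - 2) ≤ 0) :
    AntitoneOn (psiDeriv p) (Ioc 0 1) := by
  intro a ha b hb hab
  have hmaps := mapsTo_rpow_Ioc (r := 2 / p) (by positivity)
  exact sub_le_sub_right (antitoneOn_eta hc (hmaps ha) (hmaps hb)
    (rpow_le_rpow ha.1.le hab (by positivity))) 1

lemma monotoneOn_psiDeriv (hp : 0 < p) (hc : 0 ≤ (p - 1) * (p - 2)) :
    MonotoneOn (psiDeriv p) (Ioc 0 1) := by
  intro a ha b hb hab
  have hmaps := mapsTo_rpow_Ioc (r := 2 / p) (by positivity)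
  exact sub_le_sub_right (monotoneOn_eta hc (hmaps ha) (hmaps hb)
    (rpow_le_rpow ha.1.le hab (by positivity))) 1

lemma psiDeriv_nonneg (hp : 0 < p) (hc : (p - 1) * (p - 2) ≤ 0) {s : ℝ} (hs : s ∈ Ioc 0 1) :
    0 ≤ psiDeriv p s :=
  psiDeriv_one (p := p) ▸ antitoneOn_psiDeriv hp hc hs ⟨one_pos, le_rfl⟩ hs.2

lemma psiDeriv_nonpos (hp : 0 < p) (hc : 0 ≤ (p - 1) * (p - 2)) {s : ℝ} (hs : s ∈ Ioc 0 1) :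
    psiDeriv p s ≤ 0 :=
  psiDeriv_one (p := p) ▸ monotoneOn_psiDeriv hp hc hs ⟨one_pos, le_rfl⟩ hs.2

lemma deriv_psi_eqOn (hp : 0 < p) : EqOn (deriv (psi p)) (psiDeriv p) (Ioi 0) :=
  fun _ hs ↦ (hasDerivAt_psi hp.ne' hs).deriv

lemma concaveOn_psi (hp : 0 < p) (hc : (p - 1) * (p - 2) ≤ 0) : ConcaveOn ℝ (Ioc 0 1) (psi p) := by
  refine AntitoneOn.concaveOn_of_deriv (convex_Ioc 0 1)
    (fun s hs ↦ (hasDerivAt_psi hp.ne' hs.1).continuousAt.continuousWithinAt)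
    (fun s hs ↦
      (hasDerivAt_psi hp.ne' (interior_subset hs).1).differentiableAt.differentiableWithinAt)
    fun a ha b hb hab ↦ ?_
  rw [interior_Ioc] at ha hb
  rw [deriv_psi_eqOn hp ha.1, deriv_psi_eqOn hp hb.1]
  exact antitoneOn_psiDeriv hp hc (Ioo_subset_Ioc_self ha) (Ioo_subset_Ioc_self hb) hab

lemma convexOn_psi (hp : 0 < p) (hc : 0 ≤ (p - 1) * (p - 2)) : ConvexOn ℝ (Ioc 0 1) (psi p) := by
  refine MonotoneOn.convexOn_of_deriv (convex_Ioc 0 1)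
    (fun s hs ↦ (hasDerivAt_psi hp.ne' hs.1).continuousAt.continuousWithinAt)
    (fun s hs ↦
      (hasDerivAt_psi hp.ne' (interior_subset hs).1).differentiableAt.differentiableWithinAt)
    fun a ha b hb hab ↦ ?_
  rw [interior_Ioc] at ha hb
  rw [deriv_psi_eqOn hp ha.1, deriv_psi_eqOn hp hb.1]
  exact monotoneOn_psiDeriv hp hc (Ioo_subset_Ioc_self ha) (Ioo_subset_Ioc_self hb) hab

lemma psi_min_le (hp : 0 < p) (hc : (p - 1) * (p - 2) ≤ 0) {s X Y : ℝ} (hs : s ∈ Ioc 0 1)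
    (hX : 0 < X) (hY : 0 < Y) (hXY : 1 ≤ X * Y) :
    psi p (min (min X Y) 1) ≤ psi p s + psiDeriv p s * (X - s) := by
  have hψ := concaveOn_psi hp hc
  have h1 : (1 : ℝ) ∈ Ioc 0 1 := ⟨one_pos, le_rfl⟩
  rcases le_or_gt X 1 with hX1 | hX1
  · rw [min_eq_left (by nlinarith : X ≤ Y), min_eq_left hX1]
    exact hψ.le_tangent_of_hasDerivAt hs ⟨hX, hX1⟩ (hasDerivAt_psi hp.ne' hs.1)
  · have hv : min (min X Y) 1 ∈ Ioc (0 : ℝ) 1 := ⟨lt_min (lt_min hX hY) one_pos, min_le_right _ _⟩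
    have hv1 := hψ.le_tangent_of_hasDerivAt h1 hv (hasDerivAt_psi hp.ne' one_pos)
    have h1s := hψ.le_tangent_of_hasDerivAt hs h1 (hasDerivAt_psi hp.ne' hs.1)
    rw [psiDeriv_one, zero_mul, add_zero] at hv1
    linarith [mul_le_mul_of_nonneg_left hX1.le (psiDeriv_nonneg hp hc hs)]

lemma le_psi_min (hp : 0 < p) (hc : 0 ≤ (p - 1) * (p - 2)) {s X Y : ℝ} (hs : s ∈ Ioc 0 1)
    (hX : 0 < X) (hY : 0 < Y) (hXY : 1 ≤ X * Y) :
    psi p s + psiDeriv p s * (X - s) ≤ psi p (min (min X Y) 1) := by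
  have hψ := convexOn_psi hp hc
  have h1 : (1 : ℝ) ∈ Ioc 0 1 := ⟨one_pos, le_rfl⟩
  rcases le_or_gt X 1 with hX1 | hX1
  · rw [min_eq_left (by nlinarith : X ≤ Y), min_eq_left hX1]
    exact hψ.tangent_le_of_hasDerivAt hs ⟨hX, hX1⟩ (hasDerivAt_psi hp.ne' hs.1)
  · have hv : min (min X Y) 1 ∈ Ioc (0 : ℝ) 1 := ⟨lt_min (lt_min hX hY) one_pos, min_le_right _ _⟩
    have hv1 := hψ.tangent_le_of_hasDerivAt h1 hv (hasDerivAt_psi hp.ne' one_pos)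
    have h1s := hψ.tangent_le_of_hasDerivAt hs h1 (hasDerivAt_psi hp.ne' hs.1)
    rw [psiDeriv_one, zero_mul, add_zero] at hv1
    linarith [mul_le_mul_of_nonpos_left hX1.le (psiDeriv_nonpos hp hc hs)]

end

def coneΩ : Set (ℝ × ℝ × ℝ) :=
  {u | 0 ≤ u.1 ∧ 0 ≤ u.2.1 ∧ 0 ≤ u.2.2 ∧ u.2.2 ≤ Real.sqrt (u.1 * u.2.1)}

lemma mem_coneΩ_iff {x y z : ℝ} :
    (x, y, z) ∈ coneΩ ↔ 0 ≤ x ∧ 0 ≤ y ∧ 0 ≤ z ∧ z ^ 2 ≤ x * y := by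
  simp only [coneΩ, mem_ofPred_eq]
  constructor
  · rintro ⟨hx, hy, hz, hzxy⟩
    exact ⟨hx, hy, hz, (le_sqrt hz (mul_nonneg hx hy)).1 hzxy⟩
  · rintro ⟨hx, hy, hz, hzxy⟩
    exact ⟨hx, hy, hz, (le_sqrt hz (mul_nonneg hx hy)).2 hzxy⟩

lemma swap_mem_coneΩ {x y z : ℝ} (h : (x, y, z) ∈ coneΩ) : (y, x, z) ∈ coneΩ := by
  rw [mem_coneΩ_iff] at h ⊢
  obtain ⟨hx, hy, hz, hzxy⟩ := h
  exact ⟨hy, hx, hz, by linarith⟩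

lemma pos_of_mem_coneΩ {x y z : ℝ} (h : (x, y, z) ∈ coneΩ) (hz : 0 < z) : 0 < x ∧ 0 < y := by
  obtain ⟨hx, hy, -, hzxy⟩ := mem_coneΩ_iff.1 h
  have hxy : 0 < x * y := (pow_pos hz 2).trans_le hzxy
  exact ⟨lt_of_le_of_ne hx (by rintro rfl; simp at hxy),
    lt_of_le_of_ne hy (by rintro rfl; simp at hxy)⟩

lemma convex_coneΩ : Convex ℝ coneΩ := by
  rintro ⟨a₁, a₂, a₃⟩ ha ⟨b₁, b₂, b₃⟩ hb s t hs ht -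
  obtain ⟨ha₁, ha₂, ha₃, ha⟩ := mem_coneΩ_iff.1 ha
  obtain ⟨hb₁, hb₂, hb₃, hb⟩ := mem_coneΩ_iff.1 hb
  simp only [Prod.smul_mk, Prod.mk_add_mk, smul_eq_mul]
  refine mem_coneΩ_iff.2 ⟨by positivity, by positivity, by positivity, ?_⟩
  -- `(a₃ b₃)² ≤ (a₁ b₂)(a₂ b₁)`, so AM-GM gives `2 a₃ b₃ ≤ a₁ b₂ + a₂ b₁`
  have hcross : 2 * (a₃ * b₃) ≤ a₁ * b₂ + a₂ * b₁ := by
    refine (pow_le_pow_iff_left₀ (by positivity) (by positivity) two_ne_zero).1 ?_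
    nlinarith [mul_le_mul ha hb (sq_nonneg _) (by positivity), sq_nonneg (a₁ * b₂ - a₂ * b₁)]
  nlinarith [mul_le_mul_of_nonneg_left ha (sq_nonneg s), mul_le_mul_of_nonneg_left hb (sq_nonneg t),
    mul_le_mul_of_nonneg_left hcross (mul_nonneg hs ht)]

lemma Gp_of_ne_zero (p x y : ℝ) {z : ℝ} (hz : z ≠ 0) :
    Gp p (x, y, z) = x + y + psi p (min (min (x / z) (y / z)) 1) * z := by
  simp only [Gp, psi, hz, if_false]
  ring

lemma Gp_zero (p x y : ℝ) : Gp p (x, y, 0) = x + y := by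
  simp [Gp]

lemma Gp_swap (p x y z : ℝ) : Gp p (y, x, z) = Gp p (x, y, z) := by
  simp only [Gp, min_comm (y / z) (x / z)]
  ring

def swapXY : ℝ × ℝ × ℝ →ₗ[ℝ] ℝ × ℝ × ℝ where
  toFun u := (u.2.1, u.1, u.2.2)
  map_add' _ _ := rfl
  map_smul' _ _ := rfl

noncomputable def tangentPlane (p s : ℝ) : ℝ × ℝ × ℝ →ₗ[ℝ] ℝ where
  toFun u := u.1 + u.2.1 + psi p s * u.2.2 + psiDeriv p s * (u.1 - s * u.2.2)
  map_add' u v := by simp only [Prod.fst_add, Prod.snd_add]; ring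
  map_smul' r u := by simp only [Prod.smul_fst, Prod.smul_snd, smul_eq_mul, RingHom.id_apply]; ring

section

variable {p : ℝ}

lemma tangentPlane_apply (s x y z : ℝ) :
    tangentPlane p s (x, y, z) = x + y + psi p s * z + psiDeriv p s * (x - s * z) :=
  rfl

lemma Gp_le_tangentPlane (hp : 0 < p) (hc : (p - 1) * (p - 2) ≤ 0) {s x y z : ℝ} (hs : s ∈ Ioc 0 1)
    (hu : (x, y, z) ∈ coneΩ) : Gp p (x, y, z) ≤ tangentPlane p s (x, y, z) := by
  obtain ⟨hx, -, hz, hzxy⟩ := mem_coneΩ_iff.1 hu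
  rw [tangentPlane_apply]
  rcases hz.eq_or_lt with rfl | hz
  · rw [Gp_zero]
    nlinarith [mul_nonneg (psiDeriv_nonneg hp hc hs) hx]
  obtain ⟨hx, hy⟩ := pos_of_mem_coneΩ hu hz
  have hXY : 1 ≤ x / z * (y / z) := by
    rw [div_mul_div_comm, one_le_div (by positivity)]
    linarith
  have key := mul_le_mul_of_nonneg_right
    (psi_min_le hp hc hs (div_pos hx hz) (div_pos hy hz) hXY) hz.le
  rw [Gp_of_ne_zero p x y hz.ne']
  calc _ ≤ x + y + (psi p s + psiDeriv p s * (x / z - s)) * z := by linarith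
    _ = _ := by field_simp; ring

lemma tangentPlane_le_Gp (hp : 0 < p) (hc : 0 ≤ (p - 1) * (p - 2)) {s x y z : ℝ} (hs : s ∈ Ioc 0 1)
    (hu : (x, y, z) ∈ coneΩ) : tangentPlane p s (x, y, z) ≤ Gp p (x, y, z) := by
  obtain ⟨hx, -, hz, hzxy⟩ := mem_coneΩ_iff.1 hu
  rw [tangentPlane_apply]
  rcases hz.eq_or_lt with rfl | hz
  · rw [Gp_zero]
    nlinarith [mul_nonneg (neg_nonneg.2 (psiDeriv_nonpos hp hc hs)) hx]
  obtain ⟨hx, hy⟩ := pos_of_mem_coneΩ hu hz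
  have hXY : 1 ≤ x / z * (y / z) := by
    rw [div_mul_div_comm, one_le_div (by positivity)]
    linarith
  have key := mul_le_mul_of_nonneg_right
    (le_psi_min hp hc hs (div_pos hx hz) (div_pos hy hz) hXY) hz.le
  rw [Gp_of_ne_zero p x y hz.ne']
  calc _ = x + y + (psi p s + psiDeriv p s * (x / z - s)) * z := by field_simp; ring
    _ ≤ _ := by linarith

lemma exists_tangentPlane_eq_Gp {x y z : ℝ} (hu : (x, y, z) ∈ coneΩ) (hxy : x ≤ y) :
    ∃ s ∈ Ioc (0 : ℝ) 1, tangentPlane p s (x, y, z) = Gp p (x, y, z) := by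
  rcases (mem_coneΩ_iff.1 hu).2.2.1.eq_or_lt with rfl | hz
  · exact ⟨1, ⟨one_pos, le_rfl⟩, by rw [tangentPlane_apply, Gp_zero, psiDeriv_one]; ring⟩
  obtain ⟨hx, -⟩ := pos_of_mem_coneΩ hu hz
  refine ⟨min (x / z) 1, ⟨lt_min (div_pos hx hz) one_pos, min_le_right _ _⟩, ?_⟩
  rw [tangentPlane_apply, Gp_of_ne_zero p x y hz.ne',
    min_eq_left (div_le_div_of_nonneg_right hxy hz.le)]
  have htouch : psiDeriv p (min (x / z) 1) * (x - min (x / z) 1 * z) = 0 := by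
    rcases le_total (x / z) 1 with h | h
    · rw [min_eq_left h, div_mul_cancel₀ x hz.ne', sub_self, mul_zero]
    · rw [min_eq_right h, psiDeriv_one, zero_mul]
  linarith

lemma exists_linearMap_ge_Gp (hp : 0 < p) (hc : (p - 1) * (p - 2) ≤ 0) {m : ℝ × ℝ × ℝ}
    (hm : m ∈ coneΩ) : ∃ ℓ : ℝ × ℝ × ℝ →ₗ[ℝ] ℝ, (∀ u ∈ coneΩ, Gp p u ≤ ℓ u) ∧ ℓ m = Gp p m := by
  obtain ⟨x, y, z⟩ := m
  wlog hxy : x ≤ y generalizing x y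
  · obtain ⟨ℓ, hle, heq⟩ := this y x (swap_mem_coneΩ hm) (le_of_not_ge hxy)
    refine ⟨ℓ ∘ₗ swapXY, fun ⟨x', y', z'⟩ hu ↦ ?_, by rw [← Gp_swap]; exact heq⟩
    rw [← Gp_swap]
    exact hle _ (swap_mem_coneΩ hu)
  obtain ⟨s, hs, heq⟩ := exists_tangentPlane_eq_Gp (p := p) hm hxy
  exact ⟨tangentPlane p s, fun ⟨_, _, _⟩ hu ↦ Gp_le_tangentPlane hp hc hs hu, heq⟩

lemma exists_linearMap_le_Gp (hp : 0 < p) (hc : 0 ≤ (p - 1) * (p - 2)) {m : ℝ × ℝ × ℝ}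
    (hm : m ∈ coneΩ) : ∃ ℓ : ℝ × ℝ × ℝ →ₗ[ℝ] ℝ, (∀ u ∈ coneΩ, ℓ u ≤ Gp p u) ∧ ℓ m = Gp p m := by
  obtain ⟨x, y, z⟩ := m
  wlog hxy : x ≤ y generalizing x y
  · obtain ⟨ℓ, hle, heq⟩ := this y x (swap_mem_coneΩ hm) (le_of_not_ge hxy)
    refine ⟨ℓ ∘ₗ swapXY, fun ⟨x', y', z'⟩ hu ↦ ?_, by rw [← Gp_swap]; exact heq⟩
    rw [← Gp_swap]
    exact hle _ (swap_mem_coneΩ hu)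
  obtain ⟨s, hs, heq⟩ := exists_tangentPlane_eq_Gp (p := p) hm hxy
  exact ⟨tangentPlane p s, fun ⟨_, _, _⟩ hu ↦ tangentPlane_le_Gp hp hc hs hu, heq⟩

lemma concaveOn_Gp (hp : 0 < p) (hc : (p - 1) * (p - 2) ≤ 0) : ConcaveOn ℝ coneΩ (Gp p) :=
  .of_forall_exists_concaveOn_ge convex_coneΩ fun _ hm ↦
    let ⟨ℓ, hle, heq⟩ := exists_linearMap_ge_Gp hp hc hm
    ⟨ℓ, ℓ.concaveOn convex_coneΩ, hle, heq⟩

lemma convexOn_Gp (hp : 0 < p) (hc : 0 ≤ (p - 1) * (p - 2)) : ConvexOn ℝ coneΩ (Gp p) :=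
  .of_forall_exists_convexOn_le convex_coneΩ fun _ hm ↦
    let ⟨ℓ, hle, heq⟩ := exists_linearMap_le_Gp hp hc hm
    ⟨ℓ, ℓ.convexOn convex_coneΩ, hle, heq⟩

end

/-- `G_p` is concave on `Ω` for `p ∈ (1,2)`, and convex on `Ω` for `p ∈ (0,1] ∪ [2,∞)`. -/
theorem statement19 (p : ℝ)
    (Ω : Set (ℝ × ℝ × ℝ))
    (hΩ : Ω = {u : ℝ × ℝ × ℝ |
      0 ≤ u.1 ∧ 0 ≤ u.2.1 ∧ 0 ≤ u.2.2 ∧ u.2.2 ≤ Real.sqrt (u.1 * u.2.1)}) :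
    (p ∈ Set.Ioo (1 : ℝ) 2 → ConcaveOn ℝ Ω (Gp p)) ∧
    (p ∈ Set.Ioc (0 : ℝ) 1 ∪ Set.Ici (2 : ℝ) → ConvexOn ℝ Ω (Gp p)) := by
  subst hΩ
  refine ⟨fun ⟨h1, h2⟩ ↦ concaveOn_Gp (by linarith) (by nlinarith), ?_⟩
  rintro (⟨h0, h1⟩ | h2)
  · exact convexOn_Gp h0 (by nlinarith)
  · exact convexOn_Gp (by linarith [mem_Ici.1 h2]) (by nlinarith [mem_Ici.1 h2])
end
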